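/- Let G=(V,E) be a finite connected graph with m edges, let w_{0,e}>0 be initial weights, fix θ>1, α∈[0,1] and a step size s with 0<s<1. Define iterates by w_e^{(0)}=w_{0,e} and w_e^{(j+1)} = ρ_e^{(j)} − s·κ_e^{(j)}·ρ_e^{(j)}, where ρ_e^{(j)} and κ_e^{(j)} denote the distance and Ollivier's α-Ricci curvature of the edge e computed from the weights w^{(j)}, and assume that at every step j and every edge e the θ-surgery condition w_e^{(j)}/ρ_e^{(j)} ≤ θ holds. Then every iterate is strictly positive (so the flow has a unique global solution) and for all j∈ℕ and all e∈E: (1−s)^j·θ^{−j}·w_{0,e} ≤ w_e^{(j)} ≤ (1+ms)^j·∑_{τ∈E} w_{0,τ}. -/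

import Mathlib

open Finset

section RicciDefs

variable {V : Type*}

/-- The sum of the weights of the edges of a walk. -/
noncomputable def walkWeight {G : SimpleGraph V} (w : Sym2 V → ℝ) {u v : V} (p : G.Walk u v) : ℝ :=
  (p.edges.map w).sum

/-- The weighted graph distance: infimum of total weight over walks joining `u` and `v`. -/
noncomputable def gdist (G : SimpleGraph V) (w : Sym2 V → ℝ) (u v : V) : ℝ :=
  sInf {x : ℝ | ∃ p : G.Walk u v, x = walkWeight w p}

/-- A choice of ordered endpoints of an unordered pair. -/
noncomputable def endpoints (e : Sym2 V) : V × V := Quot.out e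

/-- The weighted distance between the endpoints of an edge. -/
noncomputable def edist (G : SimpleGraph V) (w : Sym2 V → ℝ) (e : Sym2 V) : ℝ :=
  gdist G w (endpoints e).1 (endpoints e).2

/-- The `α`-lazy one-step random walk at `x`. -/
noncomputable def lazyWalk (G : SimpleGraph V) [Fintype V] [DecidableEq V] [DecidableRel G.Adj]
    (w : Sym2 V → ℝ) (α : ℝ) (x : V) : V → ℝ := fun z =>
  if z = x then α
  else if G.Adj x z then (1 - α) * w s(x, z) / ∑ u ∈ G.neighborFinset x, w s(x, u)
  else 0

/-- A probability measure on a finite vertex set. -/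
def IsProbMeasure [Fintype V] (μ : V → ℝ) : Prop :=
  (∀ x, 0 ≤ μ x) ∧ ∑ x, μ x = 1

/-- A coupling between two probability measures. -/
def IsCoupling [Fintype V] (μ₁ μ₂ : V → ℝ) (A : V → V → ℝ) : Prop :=
  (∀ u v, A u v ∈ Set.Icc (0 : ℝ) 1) ∧ (∀ u, ∑ x, A u x = μ₁ u) ∧ (∀ v, ∑ y, A y v = μ₂ v)

/-- The Wasserstein distance between two probability measures. -/
noncomputable def wasserstein [Fintype V] (G : SimpleGraph V) (w : Sym2 V → ℝ)
    (μ₁ μ₂ : V → ℝ) : ℝ :=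
  sInf {x : ℝ | ∃ A : V → V → ℝ, IsCoupling μ₁ μ₂ A ∧ x = ∑ u, ∑ v, A u v * gdist G w u v}

/-- Ollivier's `α`-Ricci curvature of an edge. -/
noncomputable def ollivier [Fintype V] [DecidableEq V] (G : SimpleGraph V) [DecidableRel G.Adj]
    (w : Sym2 V → ℝ) (α : ℝ) (e : Sym2 V) : ℝ :=
  1 - wasserstein G w (lazyWalk G w α (endpoints e).1) (lazyWalk G w α (endpoints e).2)
        / edist G w e

end RicciDefs

section Aux
open Finset
variable {V : Type*} {G : SimpleGraph V}

lemma walkWeight_nonneg {w : Sym2 V → ℝ} (hw : ∀ e ∈ G.edgeSet, 0 ≤ w e)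
    {u v : V} (p : G.Walk u v) : 0 ≤ walkWeight w p := by
  unfold walkWeight
  apply List.sum_nonneg
  intro x hx
  simp only [List.mem_map] at hx
  obtain ⟨e, he, rfl⟩ := hx
  exact hw e (p.edges_subset_edgeSet he)

lemma gdist_nonneg {w : Sym2 V → ℝ} (hw : ∀ e ∈ G.edgeSet, 0 ≤ w e) (u v : V) :
    0 ≤ gdist G w u v := by
  apply Real.sInf_nonneg
  rintro x ⟨p, rfl⟩
  exact walkWeight_nonneg hw p

lemma gdist_le_walkWeight {w : Sym2 V → ℝ} (hw : ∀ e ∈ G.edgeSet, 0 ≤ w e)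
    {u v : V} (p : G.Walk u v) : gdist G w u v ≤ walkWeight w p := by
  apply csInf_le
  · exact ⟨0, by rintro x ⟨q, rfl⟩; exact walkWeight_nonneg hw q⟩
  · exact ⟨p, rfl⟩

lemma endpoints_mk (e : Sym2 V) : s((endpoints e).1, (endpoints e).2) = e := by
  unfold endpoints
  exact Quot.out_eq e

lemma endpoints_adj (he : e ∈ G.edgeSet) : G.Adj (endpoints e).1 (endpoints e).2 := by
  rw [← SimpleGraph.mem_edgeSet, endpoints_mk]; exact he

end Aux
section Aux2
open Finset
variable {V : Type*} {G : SimpleGraph V}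

lemma edist_le {w : Sym2 V → ℝ} (hw : ∀ e ∈ G.edgeSet, 0 ≤ w e)
    {e : Sym2 V} (he : e ∈ G.edgeSet) : _root_.edist G w e ≤ w e := by
  have hadj := endpoints_adj he
  have := gdist_le_walkWeight hw (SimpleGraph.Walk.cons hadj SimpleGraph.Walk.nil)
  unfold _root_.edist
  refine this.trans_eq ?_
  unfold walkWeight
  simp only [SimpleGraph.Walk.edges_cons, SimpleGraph.Walk.edges_nil, List.map_cons,
    List.map_nil, List.sum_cons, List.sum_nil, add_zero]
  exact congrArg w (endpoints_mk e)

lemma edist_pos' {w : Sym2 V → ℝ} [Fintype V] [DecidableEq V] [DecidableRel G.Adj]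
    (hw : ∀ e ∈ G.edgeFinset, 0 < w e)
    {e : Sym2 V} (he : e ∈ G.edgeFinset) : 0 < _root_.edist G w e := by
  classical
  have hne : G.edgeFinset.Nonempty := ⟨e, he⟩
  set δ := G.edgeFinset.inf' hne w with hδ
  have hδpos : 0 < δ := by
    obtain ⟨τ, hτ, hτe⟩ := Finset.exists_mem_eq_inf' hne w
    rw [hδ, hτe]; exact hw τ hτ
  have hadj := endpoints_adj (SimpleGraph.mem_edgeFinset.mp he)
  have hxy : (endpoints e).1 ≠ (endpoints e).2 := hadj.ne
  have hlb : ∀ x ∈ {x : ℝ | ∃ p : G.Walk (endpoints e).1 (endpoints e).2, x = walkWeight w p},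
      δ ≤ x := by
    rintro x ⟨p, rfl⟩
    obtain ⟨b, hab, q, hp⟩ :=
      SimpleGraph.Walk.not_nil_iff.mp (SimpleGraph.Walk.not_nil_of_ne hxy (p := p))
    subst hp
    · have h1 : δ ≤ w s((endpoints e).1, b) := by
        apply Finset.inf'_le
        rw [SimpleGraph.mem_edgeFinset]; exact hab
      have h2 : 0 ≤ walkWeight w q :=
        walkWeight_nonneg (fun τ hτ => (hw τ (SimpleGraph.mem_edgeFinset.mpr hτ)).le) q
      unfold walkWeight at *
      simp only [SimpleGraph.Walk.edges_cons, List.map_cons, List.sum_cons]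
      linarith
  calc 0 < δ := hδpos
    _ ≤ gdist G w (endpoints e).1 (endpoints e).2 := by
        apply le_csInf
        · exact ⟨_, ⟨SimpleGraph.Walk.cons hadj SimpleGraph.Walk.nil, rfl⟩⟩
        · exact hlb

lemma gdist_le_total [Fintype V] [DecidableEq V] [DecidableRel G.Adj]
    {w : Sym2 V → ℝ} (hw : ∀ e ∈ G.edgeFinset, 0 ≤ w e) (hconn : G.Connected)
    (u v : V) : gdist G w u v ≤ ∑ τ ∈ G.edgeFinset, w τ := by
  classical
  obtain ⟨q⟩ := hconn.preconnected u v
  set p := q.toPath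
  have hnodup : (p : G.Walk u v).edges.Nodup := (p : G.Walk u v).edges_nodup_of_support_nodup p.2.2
  have hsub : (p : G.Walk u v).edges.toFinset ⊆ G.edgeFinset := by
    intro τ hτ
    rw [List.mem_toFinset] at hτ
    exact SimpleGraph.mem_edgeFinset.mpr ((p : G.Walk u v).edges_subset_edgeSet hτ)
  have h1 : walkWeight w (p : G.Walk u v) = ∑ τ ∈ (p : G.Walk u v).edges.toFinset, w τ := by
    unfold walkWeight
    rw [Finset.sum_eq_multiset_sum]
    rw [List.toFinset_val, List.dedup_eq_self.mpr hnodup]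
    simp
  have h2 : walkWeight w (p : G.Walk u v) ≤ ∑ τ ∈ G.edgeFinset, w τ := by
    rw [h1]
    exact Finset.sum_le_sum_of_subset_of_nonneg hsub (fun τ hτ _ => hw τ hτ)
  exact (gdist_le_walkWeight (fun τ hτ => hw τ (SimpleGraph.mem_edgeFinset.mpr hτ)) _).trans h2

end Aux2
set_option linter.unusedSectionVars false
section Aux3
open Finset
variable {V : Type*} {G : SimpleGraph V} [Fintype V] [DecidableEq V] [DecidableRel G.Adj]

lemma lazyWalk_prob {w : Sym2 V → ℝ} (hw : ∀ e ∈ G.edgeFinset, 0 < w e)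
    {α : ℝ} (hα : α ∈ Set.Icc (0:ℝ) 1) {x : V} (hx : (G.neighborFinset x).Nonempty) :
    IsProbMeasure (lazyWalk G w α x) := by
  obtain ⟨hα0, hα1⟩ := hα
  have hS : 0 < ∑ u ∈ G.neighborFinset x, w s(x, u) := by
    apply Finset.sum_pos
    · intro u hu
      exact hw _ (SimpleGraph.mem_edgeFinset.mpr ((SimpleGraph.mem_neighborFinset _ _ _).mp hu))
    · exact hx
  constructor
  · intro z
    unfold lazyWalk
    split_ifs with h1 h2
    · exact hα0
    · apply div_nonneg _ hS.le
      have := hw s(x, z) (SimpleGraph.mem_edgeFinset.mpr h2)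
      nlinarith
    · exact le_rfl
  · have hsplit : ∑ z, lazyWalk G w α x z
        = lazyWalk G w α x x + ∑ z ∈ Finset.univ.erase x, lazyWalk G w α x z := by
      rw [← Finset.add_sum_erase _ _ (Finset.mem_univ x)]
    rw [hsplit]
    have h1 : lazyWalk G w α x x = α := by unfold lazyWalk; simp
    have h2 : ∑ z ∈ Finset.univ.erase x, lazyWalk G w α x z
        = ∑ z ∈ G.neighborFinset x,
            ((1 - α) * w s(x, z) / ∑ u ∈ G.neighborFinset x, w s(x, u)) := by
      have step1 : ∑ z ∈ Finset.univ.erase x, lazyWalk G w α x z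
          = ∑ z ∈ Finset.univ.erase x, (if G.Adj x z then
              (1 - α) * w s(x, z) / ∑ u ∈ G.neighborFinset x, w s(x, u) else 0) := by
        apply Finset.sum_congr rfl
        intro z hz
        have hzx : z ≠ x := Finset.ne_of_mem_erase hz
        unfold lazyWalk
        rw [if_neg hzx]
      rw [step1, ← Finset.sum_filter]
      apply Finset.sum_congr _ (fun _ _ => rfl)
      ext z
      simp only [Finset.mem_filter, Finset.mem_erase, Finset.mem_univ,
        SimpleGraph.mem_neighborFinset, true_and, and_iff_right_iff_imp]
      exact fun h => ⟨(G.ne_of_adj h).symm, trivial⟩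
    rw [h1, h2, ← Finset.sum_div, ← Finset.mul_sum]
    field_simp
    ring

lemma prob_le_one {μ : V → ℝ} (h : IsProbMeasure μ) (z : V) : μ z ≤ 1 := by
  obtain ⟨h0, h1⟩ := h
  calc μ z ≤ ∑ x, μ x := Finset.single_le_sum (fun x _ => h0 x) (Finset.mem_univ z)
    _ = 1 := h1

lemma wasserstein_nonneg {w : Sym2 V → ℝ} (hw : ∀ e ∈ G.edgeSet, 0 ≤ w e)
    (μ₁ μ₂ : V → ℝ) : 0 ≤ wasserstein G w μ₁ μ₂ := by
  apply Real.sInf_nonneg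
  rintro x ⟨A, hA, rfl⟩
  apply Finset.sum_nonneg; intro u _
  apply Finset.sum_nonneg; intro v _
  exact mul_nonneg (hA.1 u v).1 (gdist_nonneg hw u v)

lemma wasserstein_le_total (hconn : G.Connected) {w : Sym2 V → ℝ}
    (hw : ∀ e ∈ G.edgeFinset, 0 ≤ w e)
    {μ₁ μ₂ : V → ℝ} (h₁ : IsProbMeasure μ₁) (h₂ : IsProbMeasure μ₂) :
    wasserstein G w μ₁ μ₂ ≤ ∑ τ ∈ G.edgeFinset, w τ := by
  classical
  have hw' : ∀ e ∈ G.edgeSet, 0 ≤ w e := fun e he => hw e (SimpleGraph.mem_edgeFinset.mpr he)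
  set A : V → V → ℝ := fun u v => μ₁ u * μ₂ v with hA
  have hcoup : IsCoupling μ₁ μ₂ A := by
    refine ⟨fun u v => ⟨mul_nonneg (h₁.1 u) (h₂.1 v), ?_⟩, fun u => ?_, fun v => ?_⟩
    · calc μ₁ u * μ₂ v ≤ 1 * 1 :=
            mul_le_mul (prob_le_one h₁ u) (prob_le_one h₂ v) (h₂.1 v) zero_le_one
        _ = 1 := by ring
    · rw [hA]; simp only [← Finset.mul_sum, h₂.2, mul_one]
    · rw [hA]; simp only [← Finset.sum_mul, h₁.2, one_mul]
  have hmem : (∑ u, ∑ v, A u v * gdist G w u v) ∈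
      {x : ℝ | ∃ B : V → V → ℝ, IsCoupling μ₁ μ₂ B ∧ x = ∑ u, ∑ v, B u v * gdist G w u v} :=
    ⟨A, hcoup, rfl⟩
  have hbdd : BddBelow {x : ℝ | ∃ B : V → V → ℝ, IsCoupling μ₁ μ₂ B ∧
      x = ∑ u, ∑ v, B u v * gdist G w u v} := by
    refine ⟨0, ?_⟩
    rintro x ⟨B, hB, rfl⟩
    apply Finset.sum_nonneg; intro u _
    apply Finset.sum_nonneg; intro v _
    exact mul_nonneg (hB.1 u v).1 (gdist_nonneg hw' u v)
  have hcost : (∑ u, ∑ v, A u v * gdist G w u v) ≤ ∑ τ ∈ G.edgeFinset, w τ := by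
    set D := ∑ τ ∈ G.edgeFinset, w τ with hD
    calc ∑ u, ∑ v, A u v * gdist G w u v
        ≤ ∑ u, ∑ v, A u v * D := by
          apply Finset.sum_le_sum; intro u _
          apply Finset.sum_le_sum; intro v _
          exact mul_le_mul_of_nonneg_left (gdist_le_total hw hconn u v)
            (mul_nonneg (h₁.1 u) (h₂.1 v))
      _ = D := by
          simp only [hA, ← Finset.sum_mul, ← Finset.mul_sum]
          rw [h₂.2]
          simp only [mul_one, ← Finset.sum_mul, h₁.2, one_mul]
  exact (csInf_le hbdd hmem).trans hcost

end Aux3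

/-- Theorem 2.5 (i): bounds for the discrete Ricci curvature flow
`w' = ρ − s·κ·ρ` with Ollivier's curvature, under the θ-surgery condition. -/
theorem ollivier_rho_flow_surgery_bounds {V : Type*} [Fintype V] [DecidableEq V]
    (G : SimpleGraph V) [DecidableRel G.Adj] (hconn : G.Connected)
    (m : ℕ) (hm : G.edgeFinset.card = m)
    (θ : ℝ) (hθ : 1 < θ)
    (α : ℝ) (hα : α ∈ Set.Icc (0 : ℝ) 1)
    (s : ℝ) (hs0 : 0 < s) (hs1 : s < 1)
    (w : ℕ → Sym2 V → ℝ)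
    (hpos0 : ∀ e ∈ G.edgeFinset, 0 < w 0 e)
    (hflow : ∀ j : ℕ, ∀ e ∈ G.edgeFinset,
      w (j + 1) e = edist G (w j) e - s * ollivier G (w j) α e * edist G (w j) e)
    -- θ-surgery condition at every step
    (hsurg : ∀ j : ℕ, ∀ e ∈ G.edgeFinset, w j e / edist G (w j) e ≤ θ) :
    ∀ j : ℕ, ∀ e ∈ G.edgeFinset,
      0 < w j e ∧
      (1 - s) ^ j * θ ^ (-(j : ℤ)) * w 0 e ≤ w j e ∧
      w j e ≤ (1 + (m : ℝ) * s) ^ j * ∑ τ ∈ G.edgeFinset, w 0 τ := by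
  classical
  have hθ0 : (0:ℝ) < θ := lt_trans one_pos hθ
  have hms : (0:ℝ) < 1 + (m : ℝ) * s := by positivity
  set D : ℕ → ℝ := fun j => ∑ τ ∈ G.edgeFinset, w j τ with hD
  -- step lemma
  have step : ∀ j : ℕ, (∀ e ∈ G.edgeFinset, 0 < w j e) →
      ∀ e ∈ G.edgeFinset,
        (1 - s) / θ * w j e ≤ w (j+1) e ∧ 0 < w (j+1) e ∧ w (j+1) e ≤ w j e + s * D j := by
    intro j hpos e he
    have hw' : ∀ τ ∈ G.edgeSet, 0 ≤ w j τ :=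
      fun τ hτ => (hpos τ (SimpleGraph.mem_edgeFinset.mpr hτ)).le
    have hρpos : 0 < edist G (w j) e := edist_pos' hpos he
    have hρle : edist G (w j) e ≤ w j e := edist_le hw' (SimpleGraph.mem_edgeFinset.mp he)
    have hadj := endpoints_adj (SimpleGraph.mem_edgeFinset.mp he)
    have hx : (G.neighborFinset (endpoints e).1).Nonempty :=
      ⟨(endpoints e).2, (SimpleGraph.mem_neighborFinset _ _ _).mpr hadj⟩
    have hy : (G.neighborFinset (endpoints e).2).Nonempty :=
      ⟨(endpoints e).1, (SimpleGraph.mem_neighborFinset _ _ _).mpr hadj.symm⟩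
    set W := wasserstein G (w j) (lazyWalk G (w j) α (endpoints e).1)
      (lazyWalk G (w j) α (endpoints e).2) with hW
    have hW0 : 0 ≤ W := wasserstein_nonneg hw' _ _
    have hWle : W ≤ D j :=
      wasserstein_le_total hconn (fun τ hτ => (hpos τ hτ).le)
        (lazyWalk_prob hpos hα hx) (lazyWalk_prob hpos hα hy)
    have hform : w (j+1) e = (1 - s) * edist G (w j) e + s * W := by
      rw [hflow j e he]
      unfold ollivier
      rw [← hW]
      field_simp
      ring
    have hρlb : w j e / θ ≤ edist G (w j) e := by
      have := hsurg j e he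
      rw [div_le_iff₀ hρpos] at this
      rw [div_le_iff₀ hθ0]
      linarith
    refine ⟨?_, ?_, ?_⟩
    · have h1 : (1 - s) / θ * w j e ≤ (1 - s) * edist G (w j) e := by
        have : (1 - s) / θ * w j e = (1 - s) * (w j e / θ) := by ring
        rw [this]
        exact mul_le_mul_of_nonneg_left hρlb (by linarith)
      nlinarith
    · nlinarith
    · nlinarith
  -- main invariant by induction
  have key : ∀ j : ℕ,
      (∀ e ∈ G.edgeFinset, 0 < w j e ∧ (1 - s) ^ j * θ ^ (-(j : ℤ)) * w 0 e ≤ w j e) ∧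
      D j ≤ (1 + (m : ℝ) * s) ^ j * D 0 := by
    intro j
    induction j with
    | zero =>
      refine ⟨fun e he => ⟨hpos0 e he, by simp⟩, by simp⟩
    | succ j ih =>
      obtain ⟨ih1, ih2⟩ := ih
      have hpos : ∀ e ∈ G.edgeFinset, 0 < w j e := fun e he => (ih1 e he).1
      have hD0 : 0 ≤ D j := Finset.sum_nonneg (fun τ hτ => (hpos τ hτ).le)
      constructor
      · intro e he
        obtain ⟨hlow, hposn, _⟩ := step j hpos e he
        refine ⟨hposn, ?_⟩
        have hzpow : θ ^ (-((j:ℕ)+1 : ℤ)) = θ ^ (-(j : ℤ)) * θ⁻¹ := by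
          rw [show (-((j:ℕ)+1 : ℤ)) = -(j:ℤ) + (-1) by ring, zpow_add₀ hθ0.ne', zpow_neg_one]
        have h1 : (1 - s) ^ (j+1) * θ ^ (-((j+1:ℕ) : ℤ)) * w 0 e
            = (1 - s) / θ * ((1 - s) ^ j * θ ^ (-(j : ℤ)) * w 0 e) := by
          push_cast
          rw [hzpow]
          ring
        rw [h1]
        calc (1 - s) / θ * ((1 - s) ^ j * θ ^ (-(j : ℤ)) * w 0 e)
            ≤ (1 - s) / θ * w j e := by
              apply mul_le_mul_of_nonneg_left (ih1 e he).2
              apply div_nonneg <;> linarith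
          _ ≤ w (j+1) e := hlow
      · have hsum : D (j+1) ≤ D j + (m : ℝ) * (s * D j) := by
          rw [hD]
          calc ∑ τ ∈ G.edgeFinset, w (j+1) τ
              ≤ ∑ τ ∈ G.edgeFinset, (w j τ + s * D j) :=
                Finset.sum_le_sum (fun τ hτ => (step j hpos τ hτ).2.2)
            _ = D j + (m : ℝ) * (s * D j) := by
                rw [Finset.sum_add_distrib, Finset.sum_const, hm]
                simp [hD, nsmul_eq_mul]
        calc D (j+1) ≤ D j + (m : ℝ) * (s * D j) := hsum
          _ = (1 + (m : ℝ) * s) * D j := by ring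
          _ ≤ (1 + (m : ℝ) * s) * ((1 + (m : ℝ) * s) ^ j * D 0) :=
              mul_le_mul_of_nonneg_left ih2 hms.le
          _ = (1 + (m : ℝ) * s) ^ (j+1) * D 0 := by ring
  intro j e he
  obtain ⟨h1, h2⟩ := key j
  obtain ⟨hp, hl⟩ := h1 e he
  refine ⟨hp, hl, ?_⟩
  have : w j e ≤ D j :=
    Finset.single_le_sum (fun τ hτ => ((h1 τ hτ).1).le) he
  exact this.trans h2
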